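/- arXiv:2105.10550 — 5 statements merged into one kernel-verified Lean document; each statement's English description precedes it below -/
import Mathlib

section
/- Let θ = (θ_g, X_g)_{g∈G} be a topological partial action of a topological group G on a compact Hausdorff space X. For each g ∈ G set ⟨X_g⟩ = {A ∈ 2^X : A ⊆ X_g} and define 2^{θ_g} : ⟨X_{g⁻¹}⟩ → ⟨X_g⟩ by 2^{θ_g}(A) = θ_g(A). Then 2^θ = (2^{θ_g}, ⟨X_g⟩)_{g∈G} is a topological partial action of G on the hyperspace 2^X: each ⟨X_g⟩ is open in 2^X, each 2^{θ_g} is a homeomorphism, ⟨X_1⟩ = 2^X with 2^{θ_1} the identity, 2^{θ_g}(⟨X_{g⁻¹}⟩ ∩ ⟨X_h⟩) = ⟨X_g⟩ ∩ ⟨X_{gh}⟩, and 2^{θ_g}(2^{θ_h}(A)) = 2^{θ_{gh}}(A) for all A ∈ ⟨X_{h⁻¹}⟩ ∩ ⟨X_{(gh)⁻¹}⟩ and all g,h ∈ G. -/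
/-!
For `A` compact inside the open set `X_{g⁻¹}`, the image `θ_g(A)` is again compact and nonempty,
so `2^{θ_g}` is well defined; every partial-action identity for `2^θ` is the corresponding
identity for `θ` applied pointwise to the members of `A`. Continuity comes from the Vietoris
subbasis: for `U` open, the preimages under `A ↦ θ_g(A)` of `{B | B ⊆ U}` and `{B | B ∩ U ≠ ∅}`
are `{A | A ⊆ V}` and `{A | A ∩ V ≠ ∅}` with `V = X_{g⁻¹} ∩ θ_g⁻¹(U)`, which is open.
-/

/-- The hyperspace `2^X` of nonempty compact subsets of `X`. -/
structure NCompact (X : Type*) [TopologicalSpace X] where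
  carrier : Set X
  isCompact' : IsCompact carrier
  nonempty' : carrier.Nonempty

/-- The Vietoris topology on the hyperspace `2^X`, generated by the subbasic open sets
`{A | A ⊆ U}` and `{A | A ∩ U ≠ ∅}` for `U` open in `X`. -/
instance NCompact.instTopologicalSpace (X : Type*) [TopologicalSpace X] :
    TopologicalSpace (NCompact X) :=
  TopologicalSpace.generateFrom
    {S | ∃ U : Set X, IsOpen U ∧
      (S = {A : NCompact X | A.carrier ⊆ U} ∨ S = {A : NCompact X | (A.carrier ∩ U).Nonempty})}

/-- A topological partial action `θ = (θ_g, X_g)_{g ∈ G}` of a topological group `G` on a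
topological space `X`: a family of open sets `dom g = X_g` and maps `map g = θ_g` which
restrict to homeomorphisms `θ_g : X_{g⁻¹} → X_g` (with inverse `θ_{g⁻¹}`), such that
`X_1 = X`, `θ_1 = id`, `θ_g(X_{g⁻¹} ∩ X_h) = X_g ∩ X_{gh}` and `θ_g ∘ θ_h = θ_{gh}` on
`X_{h⁻¹} ∩ X_{(gh)⁻¹}`.  (The values of `map g` outside `dom g⁻¹` are irrelevant junk.) -/
structure TopPartialAction (G : Type*) (X : Type*) [Group G] [TopologicalSpace G]
    [TopologicalSpace X] where
  dom : G → Set X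
  map : G → X → X
  isOpen_dom : ∀ g, IsOpen (dom g)
  dom_one : dom 1 = Set.univ
  map_one : ∀ x, map 1 x = x
  image_dom : ∀ g, map g '' dom g⁻¹ = dom g
  map_inv : ∀ g, ∀ x ∈ dom g⁻¹, map g⁻¹ (map g x) = x
  image_inter : ∀ g h, map g '' (dom g⁻¹ ∩ dom h) = dom g ∩ dom (g * h)
  map_mul : ∀ g h, ∀ x ∈ dom h⁻¹ ∩ dom (g * h)⁻¹, map g (map h x) = map (g * h) x
  continuousOn_map : ∀ g, ContinuousOn (map g) (dom g⁻¹)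

open Set

attribute [ext] NCompact

namespace NCompact

variable {X Y : Type*} [TopologicalSpace X] [TopologicalSpace Y]

/-- The set `⟨U⟩` of the paper. -/
def subsets (U : Set X) : Set (NCompact X) := {A | A.carrier ⊆ U}

@[simp]
theorem mem_subsets {U : Set X} {A : NCompact X} : A ∈ subsets U ↔ A.carrier ⊆ U := Iff.rfl

theorem subsets_univ : subsets (univ : Set X) = univ :=
  eq_univ_of_forall fun A => subset_univ A.carrier

theorem subsets_inter (U V : Set X) : subsets (U ∩ V) = subsets U ∩ subsets V :=
  ext fun _ => subset_inter_iff

theorem isOpen_subsets {U : Set X} (hU : IsOpen U) : IsOpen (subsets U) :=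
  TopologicalSpace.isOpen_generateFrom_of_mem ⟨U, hU, Or.inl rfl⟩

theorem isOpen_setOf_inter_nonempty {U : Set X} (hU : IsOpen U) :
    IsOpen {A : NCompact X | (A.carrier ∩ U).Nonempty} :=
  TopologicalSpace.isOpen_generateFrom_of_mem ⟨U, hU, Or.inr rfl⟩

def image (f : X → Y) (A : NCompact X) (hf : ContinuousOn f A.carrier) : NCompact Y :=
  ⟨f '' A.carrier, A.isCompact'.image_of_continuousOn hf, A.nonempty'.image f⟩

theorem continuous_image_subsets {f : X → Y} {s : Set X} (hs : IsOpen s)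
    (hf : ContinuousOn f s) :
    Continuous fun A : subsets s => A.1.image f (hf.mono A.2) := by
  refine continuous_generateFrom_iff.mpr ?_
  rintro _ ⟨U, hU, rfl | rfl⟩
  all_goals
    have hV : IsOpen (s ∩ f ⁻¹' U) := hf.isOpen_inter_preimage hs hU
  · convert (isOpen_subsets hV).preimage continuous_subtype_val using 1
    ext ⟨A, hA⟩
    simp only [image, mem_preimage, mem_ofPred_eq, mem_subsets, image_subset_iff,
      subset_inter_iff]
    exact (and_iff_right hA).symm
  · convert (isOpen_setOf_inter_nonempty hV).preimage continuous_subtype_val using 1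
    ext ⟨A, hA⟩
    simp only [image, mem_preimage, mem_ofPred_eq, image_inter_nonempty_iff]
    constructor
    · rintro ⟨x, hxA, hxU⟩
      exact ⟨x, hxA, hA hxA, hxU⟩
    · rintro ⟨x, hxA, -, hxU⟩
      exact ⟨x, hxA, hxU⟩

end NCompact

open NCompact

namespace TopPartialAction

variable {G X : Type*} [Group G] [TopologicalSpace G] [TopologicalSpace X]
  (θ : TopPartialAction G X)

theorem image_subset_dom_inter {g h : G} {s : Set X} (hs : s ⊆ θ.dom g⁻¹ ∩ θ.dom h) :
    θ.map g '' s ⊆ θ.dom g ∩ θ.dom (g * h) :=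
  θ.image_inter g h ▸ image_mono hs

theorem image_image_of_subset_dom_inter {g h : G} {s : Set X}
    (hs : s ⊆ θ.dom h⁻¹ ∩ θ.dom (g * h)⁻¹) :
    θ.map g '' (θ.map h '' s) = θ.map (g * h) '' s := by
  rw [image_image]
  exact image_congr fun x hx => θ.map_mul g h x (hs hx)

/-- The map `2^{θ_g}`, with the junk value `A` for `A ∉ ⟨X_{g⁻¹}⟩`. -/
noncomputable def hyperspaceMap (g : G) (A : NCompact X) : NCompact X :=
  open Classical in
  if h : A.carrier ⊆ θ.dom g⁻¹ then A.image (θ.map g) ((θ.continuousOn_map g).mono h) else A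

variable {θ}

theorem carrier_hyperspaceMap {g : G} {A : NCompact X} (hA : A.carrier ⊆ θ.dom g⁻¹) :
    (θ.hyperspaceMap g A).carrier = θ.map g '' A.carrier := by
  rw [hyperspaceMap, dif_pos hA, NCompact.image]

theorem hyperspaceMap_one (A : NCompact X) : θ.hyperspaceMap 1 A = A := by
  ext1
  rw [carrier_hyperspaceMap (by simp [θ.dom_one])]
  simpa using image_congr fun x _ => θ.map_one x

theorem hyperspaceMap_inv {g : G} {A : NCompact X} (hA : A.carrier ⊆ θ.dom g⁻¹) :
    θ.hyperspaceMap g⁻¹ (θ.hyperspaceMap g A) = A := by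
  have hgA : (θ.hyperspaceMap g A).carrier ⊆ θ.dom g⁻¹⁻¹ := by
    rw [inv_inv, carrier_hyperspaceMap hA, ← θ.image_dom g]
    exact image_mono hA
  ext1
  rw [carrier_hyperspaceMap hgA, carrier_hyperspaceMap hA, image_image]
  simpa using image_congr fun x hx => θ.map_inv g x (hA hx)

theorem hyperspaceMap_image_inter (g h : G) :
    θ.hyperspaceMap g '' (subsets (θ.dom g⁻¹) ∩ subsets (θ.dom h)) =
      subsets (θ.dom g) ∩ subsets (θ.dom (g * h)) := by
  simp only [← subsets_inter]
  apply Subset.antisymm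
  · rintro _ ⟨A, hA, rfl⟩
    rw [mem_subsets, carrier_hyperspaceMap (hA.trans inter_subset_left)]
    exact θ.image_subset_dom_inter hA
  · intro B hB
    have hB' : B.carrier ⊆ θ.dom g⁻¹⁻¹ ∩ θ.dom (g * h) := by rwa [inv_inv]
    have hBg : B.carrier ⊆ θ.dom g⁻¹⁻¹ := hB'.trans inter_subset_left
    refine ⟨θ.hyperspaceMap g⁻¹ B, ?_, ?_⟩
    · rw [mem_subsets, carrier_hyperspaceMap hBg]
      simpa using θ.image_subset_dom_inter hB'
    · simpa using hyperspaceMap_inv hBg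

theorem hyperspaceMap_image_dom (g : G) :
    θ.hyperspaceMap g '' subsets (θ.dom g⁻¹) = subsets (θ.dom g) := by
  simpa [θ.dom_one, subsets_univ] using hyperspaceMap_image_inter (θ := θ) g 1

theorem hyperspaceMap_mul {g h : G} {A : NCompact X} (hAh : A.carrier ⊆ θ.dom h⁻¹)
    (hAgh : A.carrier ⊆ θ.dom (g * h)⁻¹) :
    θ.hyperspaceMap g (θ.hyperspaceMap h A) = θ.hyperspaceMap (g * h) A := by
  have hA := subset_inter hAh hAgh
  have hhA : (θ.hyperspaceMap h A).carrier ⊆ θ.dom g⁻¹ := by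
    rw [carrier_hyperspaceMap hAh]
    simpa using (θ.image_subset_dom_inter hA).trans inter_subset_right
  ext1
  rw [carrier_hyperspaceMap hhA, carrier_hyperspaceMap hAh, carrier_hyperspaceMap hAgh]
  exact θ.image_image_of_subset_dom_inter hA

theorem continuousOn_hyperspaceMap (g : G) :
    ContinuousOn (θ.hyperspaceMap g) (subsets (θ.dom g⁻¹)) := by
  rw [continuousOn_iff_continuous_domRestrict]
  convert continuous_image_subsets (θ.isOpen_dom g⁻¹) (θ.continuousOn_map g) with A
  exact dif_pos A.2

variable (θ)

noncomputable def hyperspace : TopPartialAction G (NCompact X) where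
  dom g := subsets (θ.dom g)
  map := θ.hyperspaceMap
  isOpen_dom g := isOpen_subsets (θ.isOpen_dom g)
  dom_one := by rw [θ.dom_one, subsets_univ]
  map_one := hyperspaceMap_one
  image_dom := hyperspaceMap_image_dom
  map_inv _ _ hA := hyperspaceMap_inv hA
  image_inter := hyperspaceMap_image_inter
  map_mul _ _ _ hA := hyperspaceMap_mul hA.1 hA.2
  continuousOn_map := continuousOn_hyperspaceMap

end TopPartialAction

theorem inducedHyperspacePartialAction_general
    {G X : Type*} [Group G] [TopologicalSpace G]
    [TopologicalSpace X]
    (θ : TopPartialAction G X) :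
    ∃ Θ : TopPartialAction G (NCompact X),
      (∀ g, Θ.dom g = {A : NCompact X | A.carrier ⊆ θ.dom g}) ∧
      (∀ g, ∀ A : NCompact X, A.carrier ⊆ θ.dom g⁻¹ →
        (Θ.map g A).carrier = θ.map g '' A.carrier) :=
  ⟨θ.hyperspace, fun _ => rfl, fun _ _ hA => TopPartialAction.carrier_hyperspaceMap hA⟩

/-- Let `θ = (θ_g, X_g)_{g∈G}` be a topological partial action of a topological group `G` on a
compact Hausdorff space `X`.  Then the family `2^θ = (2^{θ_g}, ⟨X_g⟩)_{g∈G}`, where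
`⟨X_g⟩ = {A ∈ 2^X | A ⊆ X_g}` and `2^{θ_g}(A) = θ_g(A)` for `A ∈ ⟨X_{g⁻¹}⟩`, is a
topological partial action of `G` on the hyperspace `2^X`: each `⟨X_g⟩` is open, each
`2^{θ_g} : ⟨X_{g⁻¹}⟩ → ⟨X_g⟩` is a homeomorphism, `⟨X_1⟩ = 2^X` with `2^{θ_1}` the identity,
`2^{θ_g}(⟨X_{g⁻¹}⟩ ∩ ⟨X_h⟩) = ⟨X_g⟩ ∩ ⟨X_{gh}⟩`, and `2^{θ_g} ∘ 2^{θ_h} = 2^{θ_{gh}}` on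
`⟨X_{h⁻¹}⟩ ∩ ⟨X_{(gh)⁻¹}⟩` — all of which is packaged in the existence of a
`TopPartialAction G (NCompact X)` whose domains are the `⟨X_g⟩` and whose maps act on the
domains by taking images under `θ_g`. -/
theorem inducedHyperspacePartialAction
    {G X : Type*} [Group G] [TopologicalSpace G] [IsTopologicalGroup G]
    [TopologicalSpace X] [CompactSpace X] [T2Space X]
    (θ : TopPartialAction G X) :
    ∃ Θ : TopPartialAction G (NCompact X),
      (∀ g, Θ.dom g = {A : NCompact X | A.carrier ⊆ θ.dom g}) ∧
      (∀ g, ∀ A : NCompact X, A.carrier ⊆ θ.dom g⁻¹ →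
        (Θ.map g A).carrier = θ.map g '' A.carrier) :=
  inducedHyperspacePartialAction_general θ
end

section
/- Let θ = (θ_g, X_g)_{g∈G} be a topological partial action of a topological group G on a compact Hausdorff space X, and let 2^θ be the induced partial action on the hyperspace 2^X, with domain G∗2^X = {(g,A) ∈ G × 2^X : A ⊆ X_{g⁻¹}}. If the domain G∗X = {(g,x) ∈ G × X : x ∈ X_{g⁻¹}} of θ is open in G × X, then G∗2^X is open in G × 2^X. -/
open Set

namespace NCompact

variable {X : Type*} [TopologicalSpace X]

theorem isOpen_setOf_carrier_subset {U : Set X} (hU : IsOpen U) :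
    IsOpen {A : NCompact X | A.carrier ⊆ U} :=
  TopologicalSpace.isOpen_generateFrom_of_mem ⟨U, hU, Or.inl rfl⟩

theorem isOpen_setOf_forall_mem_carrier {Y : Type*} [TopologicalSpace Y] {W : Set (Y × X)}
    (hW : IsOpen W) : IsOpen {p : Y × NCompact X | ∀ x ∈ p.2.carrier, (p.1, x) ∈ W} := by
  rw [isOpen_iff_mem_nhds]
  rintro ⟨y, A⟩ hA
  have hslice : {y} ×ˢ A.carrier ⊆ W := by
    rintro ⟨y', x⟩ ⟨rfl, hx⟩
    exact hA x hx
  obtain ⟨V, U, hV, hU, hyV, hAU, hVU⟩ :=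
    generalized_tube_lemma isCompact_singleton A.isCompact' hW hslice
  refine mem_nhds_iff.mpr ⟨V ×ˢ {B : NCompact X | B.carrier ⊆ U}, ?_,
    hV.prod (isOpen_setOf_carrier_subset hU), singleton_subset_iff.mp hyV, hAU⟩
  rintro ⟨y', B⟩ ⟨hy', hBU⟩ x hx
  exact hVU ⟨hy', hBU hx⟩

end NCompact

theorem isOpen_hyperspace_domain_general
    {G X : Type*} [Group G] [TopologicalSpace G]
    [TopologicalSpace X]
    (θ : TopPartialAction G X)
    (hopen : IsOpen {p : G × X | p.2 ∈ θ.dom p.1⁻¹}) :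
    IsOpen {p : G × NCompact X | p.2.carrier ⊆ θ.dom p.1⁻¹} :=
  NCompact.isOpen_setOf_forall_mem_carrier hopen

/-- Let `θ` be a topological partial action of a topological group `G` on a compact Hausdorff
space `X`.  If the domain `G∗X = {(g,x) | x ∈ X_{g⁻¹}}` of `θ` is open in `G × X`, then the
domain `G∗2^X = {(g,A) | A ⊆ X_{g⁻¹}}` of the induced partial action `2^θ` on the hyperspace
`2^X` is open in `G × 2^X`. -/
theorem isOpen_hyperspace_domain
    {G X : Type*} [Group G] [TopologicalSpace G] [IsTopologicalGroup G]
    [TopologicalSpace X] [CompactSpace X] [T2Space X]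
    (θ : TopPartialAction G X)
    (hopen : IsOpen {p : G × X | p.2 ∈ θ.dom p.1⁻¹}) :
    IsOpen {p : G × NCompact X | p.2.carrier ⊆ θ.dom p.1⁻¹} :=
  isOpen_hyperspace_domain_general θ hopen
end

section
/- Let θ = (θ_g, X_g)_{g∈G} be a topological partial action of a topological group G on a compact Hausdorff space X, and let 2^θ be the induced partial action on the hyperspace 2^X. If the map θ : G∗X → X, (g,x) ↦ θ_g(x), is continuous on the domain G∗X = {(g,x) : x ∈ X_{g⁻¹}} with the subspace topology of G × X, then the map 2^θ : G∗2^X → 2^X, (g,A) ↦ θ_g(A), is continuous on G∗2^X = {(g,A) ∈ G × 2^X : A ⊆ X_{g⁻¹}} with the subspace topology of G × 2^X. -/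
/-!
For `U` open, `θ_g(A) ⊆ U` is a condition on all points of `A`; continuity of `θ` at each
`(g₀, x)`, `x ∈ A₀`, together with the tube lemma for the compact set `A₀` gives a neighbourhood
`V × W` of `{g₀} × A₀` on which it holds, and `{A | A ⊆ W}` is Vietoris open. The condition
`θ_g(A) ∩ U ≠ ∅` only needs one witness point, so continuity at a single `(g₀, x)` suffices.
-/

open Filter Topology Set

namespace NCompact

variable {X : Type*} [TopologicalSpace X]

theorem tendsto_nhds_iff {α : Type*} {l : Filter α} {F : α → NCompact X} {A : NCompact X} :
    Tendsto F l (𝓝 A) ↔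
      (∀ U, IsOpen U → A.carrier ⊆ U → ∀ᶠ a in l, (F a).carrier ⊆ U) ∧
      (∀ U, IsOpen U → (A.carrier ∩ U).Nonempty → ∀ᶠ a in l, ((F a).carrier ∩ U).Nonempty) := by
  rw [TopologicalSpace.tendsto_nhds_generateFrom_iff]
  constructor
  · intro h
    exact ⟨fun U hU hA => h _ ⟨U, hU, Or.inl rfl⟩ hA, fun U hU hA => h _ ⟨U, hU, Or.inr rfl⟩ hA⟩
  · rintro ⟨hsub, hmeet⟩ S ⟨U, hU, rfl | rfl⟩ hA
    exacts [hsub U hU hA, hmeet U hU hA]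

theorem eventually_subset_of_mem_nhdsSet {A₀ : NCompact X} {W : Set X}
    (hW : W ∈ 𝓝ˢ A₀.carrier) : ∀ᶠ A in 𝓝 A₀, A.carrier ⊆ W := by
  have hopen : IsOpen {A : NCompact X | A.carrier ⊆ interior W} :=
    TopologicalSpace.isOpen_generateFrom_of_mem ⟨interior W, isOpen_interior, Or.inl rfl⟩
  filter_upwards [hopen.mem_nhds (subset_interior_iff_mem_nhdsSet.mpr hW)] with A hA
  exact hA.trans interior_subset

theorem eventually_inter_nonempty_of_mem_nhds {A₀ : NCompact X} {x : X} {O : Set X}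
    (hx : x ∈ A₀.carrier) (hO : O ∈ 𝓝 x) : ∀ᶠ A in 𝓝 A₀, (A.carrier ∩ O).Nonempty := by
  have hopen : IsOpen {A : NCompact X | (A.carrier ∩ interior O).Nonempty} :=
    TopologicalSpace.isOpen_generateFrom_of_mem ⟨interior O, isOpen_interior, Or.inr rfl⟩
  filter_upwards [hopen.mem_nhds ⟨x, hx, mem_interior_iff_mem_nhds.mpr hO⟩] with A hA
  exact hA.mono (inter_subset_inter_right _ interior_subset)

variable {Y : Type*} [TopologicalSpace Y]

theorem eventually_forall_mem_of_forall_eventually {P : Y → X → Prop} {y₀ : Y}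
    {A₀ : NCompact X} (h : ∀ x ∈ A₀.carrier, ∀ᶠ q : Y × X in 𝓝 (y₀, x), P q.1 q.2) :
    ∀ᶠ p : Y × NCompact X in 𝓝 (y₀, A₀), ∀ a ∈ p.2.carrier, P p.1 a := by
  have htube : {q : Y × X | P q.1 q.2} ∈ 𝓝 y₀ ×ˢ 𝓝ˢ A₀.carrier :=
    A₀.isCompact'.mem_prod_nhdsSet_of_forall fun x hx => by
      rw [← nhds_prod_eq]; exact h x hx
  obtain ⟨V, hV, W, hW, hVW⟩ := mem_prod_iff.mp htube
  rw [nhds_prod_eq]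
  filter_upwards [prod_mem_prod hV (eventually_subset_of_mem_nhdsSet hW)] with p hp a ha
  exact hVW (mk_mem_prod hp.1 (hp.2 ha))

theorem eventually_exists_mem_of_eventually {P : Y → X → Prop} {y₀ : Y} {A₀ : NCompact X}
    {x : X} (hx : x ∈ A₀.carrier) (h : ∀ᶠ q : Y × X in 𝓝 (y₀, x), P q.1 q.2) :
    ∀ᶠ p : Y × NCompact X in 𝓝 (y₀, A₀), ∃ a ∈ p.2.carrier, P p.1 a := by
  rw [nhds_prod_eq] at h
  obtain ⟨V, hV, O, hO, hVO⟩ := mem_prod_iff.mp h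
  rw [nhds_prod_eq]
  filter_upwards [prod_mem_prod hV (eventually_inter_nonempty_of_mem_nhds hx hO)]
    with p ⟨hpV, a, haA, haO⟩
  exact ⟨a, haA, hVO (mk_mem_prod hpV haO)⟩

variable {Z : Type*} [TopologicalSpace Z]

theorem continuousOn_image (f : Y → X → Z) (D : Y → Set X)
    (hf : ContinuousOn (fun q : Y × X => f q.1 q.2) {q | q.2 ∈ D q.1})
    (F : Y × NCompact X → NCompact Z)
    (hF : ∀ p ∈ {p : Y × NCompact X | p.2.carrier ⊆ D p.1},
      (F p).carrier = f p.1 '' p.2.carrier) :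
    ContinuousOn F {p : Y × NCompact X | p.2.carrier ⊆ D p.1} := by
  rintro ⟨y₀, A₀⟩ hA₀
  have hlocal : ∀ x ∈ A₀.carrier, ∀ U ∈ 𝓝 (f y₀ x),
      ∀ᶠ q : Y × X in 𝓝 (y₀, x), q.2 ∈ D q.1 → f q.1 q.2 ∈ U :=
    fun x hx U hU => eventually_nhdsWithin_iff.mp (hf (y₀, x) (hA₀ hx) hU)
  have hD : ∀ᶠ p in 𝓝[{p : Y × NCompact X | p.2.carrier ⊆ D p.1}] (y₀, A₀),
      p.2.carrier ⊆ D p.1 := self_mem_nhdsWithin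
  rw [ContinuousWithinAt, tendsto_nhds_iff, hF _ hA₀]
  constructor
  · intro U hU hsub
    have hall := eventually_forall_mem_of_forall_eventually
      (P := fun y x => x ∈ D y → f y x ∈ U) fun x hx =>
      hlocal x hx U (hU.mem_nhds (hsub ⟨x, hx, rfl⟩))
    filter_upwards [nhdsWithin_le_nhds hall, hD] with p hp hpD
    rw [hF p hpD]
    rintro _ ⟨a, ha, rfl⟩
    exact hp a ha (hpD ha)
  · rintro U hU ⟨_, ⟨x, hx, rfl⟩, hxU⟩
    have hex := eventually_exists_mem_of_eventually (P := fun y x => x ∈ D y → f y x ∈ U) hx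
      (hlocal x hx U (hU.mem_nhds hxU))
    filter_upwards [nhdsWithin_le_nhds hex, hD] with p ⟨a, ha, hpa⟩ hpD
    rw [hF p hpD]
    exact ⟨f p.1 a, mem_image_of_mem _ ha, hpa (hpD ha)⟩

end NCompact

theorem continuousOn_hyperspace_partialAction_general
    {G X : Type*} [Group G] [TopologicalSpace G]
    [TopologicalSpace X]
    (θ : TopPartialAction G X)
    (hcont : ContinuousOn (fun p : G × X => θ.map p.1 p.2) {p : G × X | p.2 ∈ θ.dom p.1⁻¹})
    (F : G × NCompact X → NCompact X)
    (hF : ∀ p ∈ {p : G × NCompact X | p.2.carrier ⊆ θ.dom p.1⁻¹},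
      (F p).carrier = θ.map p.1 '' p.2.carrier) :
    ContinuousOn F {p : G × NCompact X | p.2.carrier ⊆ θ.dom p.1⁻¹} :=
  NCompact.continuousOn_image θ.map (fun g => θ.dom g⁻¹) hcont F hF

/-- Let `θ` be a topological partial action of a topological group `G` on a compact Hausdorff
space `X`.  If the map `θ : G∗X → X`, `(g,x) ↦ θ_g(x)`, is continuous on the domain
`G∗X = {(g,x) | x ∈ X_{g⁻¹}}` (with the subspace topology of `G × X`), then the induced map
`2^θ : G∗2^X → 2^X`, `(g,A) ↦ θ_g(A)`, is continuous on `G∗2^X = {(g,A) | A ⊆ X_{g⁻¹}}`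
(with the subspace topology of `G × 2^X`).  Since continuity on a set only depends on the
restriction of the map to that set, this is expressed for any total map `F` that agrees with
`(g,A) ↦ θ_g(A)` on `G∗2^X`. -/
theorem continuousOn_hyperspace_partialAction
    {G X : Type*} [Group G] [TopologicalSpace G] [IsTopologicalGroup G]
    [TopologicalSpace X] [CompactSpace X] [T2Space X]
    (θ : TopPartialAction G X)
    (hcont : ContinuousOn (fun p : G × X => θ.map p.1 p.2) {p : G × X | p.2 ∈ θ.dom p.1⁻¹})
    (F : G × NCompact X → NCompact X)
    (hF : ∀ p ∈ {p : G × NCompact X | p.2.carrier ⊆ θ.dom p.1⁻¹},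
      (F p).carrier = θ.map p.1 '' p.2.carrier) :
    ContinuousOn F {p : G × NCompact X | p.2.carrier ⊆ θ.dom p.1⁻¹} :=
  continuousOn_hyperspace_partialAction_general θ hcont F hF
end

section
/- Let θ = (θ_g, X_g)_{g∈G} be a topological partial action of a topological group G on a compact Hausdorff space X. If the domain G∗X = {(g,x) ∈ G × X : x ∈ X_{g⁻¹}} is closed in G × X, then the domain G∗2^X = {(g,A) ∈ G × 2^X : A ⊆ X_{g⁻¹}} of the induced partial action on the hyperspace 2^X is closed in G × 2^X. -/
/-! If `A ⊄ D g`, pick `x ∈ A \ D g`; a box `V ×ˢ U` around `(g, x)` missing the graph of `D`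
gives the Vietoris neighbourhood `V ×ˢ {B | B ∩ U ≠ ∅}` of `(g, A)`, which misses the hyperspace
graph. -/

theorem NCompact.isOpen_setOf_inter_nonempty_s8 {X : Type*} [TopologicalSpace X] {U : Set X}
    (hU : IsOpen U) : IsOpen {A : NCompact X | (A.carrier ∩ U).Nonempty} :=
  TopologicalSpace.isOpen_generateFrom_of_mem ⟨U, hU, Or.inr rfl⟩

theorem NCompact.isClosed_setOf_carrier_subset {G X : Type*} [TopologicalSpace G]
    [TopologicalSpace X] {D : G → Set X} (hD : IsClosed {p : G × X | p.2 ∈ D p.1}) :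
    IsClosed {p : G × NCompact X | p.2.carrier ⊆ D p.1} := by
  rw [← isOpen_compl_iff, isOpen_iff_forall_mem_open]
  rintro ⟨g, A⟩ hgA
  obtain ⟨x, hxA, hx⟩ := Set.not_subset.1 hgA
  obtain ⟨V, U, hV, hU, hgV, hxU, hVU⟩ := isOpen_prod_iff.1 hD.isOpen_compl g x hx
  refine ⟨V ×ˢ {B | (B.carrier ∩ U).Nonempty}, ?_,
    hV.prod (isOpen_setOf_inter_nonempty_s8 hU), hgV, x, hxA, hxU⟩
  rintro ⟨h, B⟩ ⟨hh, y, hyB, hyU⟩ hB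
  exact hVU (Set.mk_mem_prod hh hyU) (hB hyB)

theorem isClosed_hyperspace_domain_general
    {G X : Type*} [Group G] [TopologicalSpace G]
    [TopologicalSpace X]
    (θ : TopPartialAction G X)
    (hclosed : IsClosed {p : G × X | p.2 ∈ θ.dom p.1⁻¹}) :
    IsClosed {p : G × NCompact X | p.2.carrier ⊆ θ.dom p.1⁻¹} :=
  NCompact.isClosed_setOf_carrier_subset (D := fun g ↦ θ.dom g⁻¹) hclosed

/-- Let `θ` be a topological partial action of a topological group `G` on a compact Hausdorff
space `X`.  If the domain `G∗X = {(g,x) | x ∈ X_{g⁻¹}}` of `θ` is closed in `G × X`, then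
the domain `G∗2^X = {(g,A) | A ⊆ X_{g⁻¹}}` of the induced partial action `2^θ` on the
hyperspace `2^X` is closed in `G × 2^X`. -/
theorem isClosed_hyperspace_domain
    {G X : Type*} [Group G] [TopologicalSpace G] [IsTopologicalGroup G]
    [TopologicalSpace X] [CompactSpace X] [T2Space X]
    (θ : TopPartialAction G X)
    (hclosed : IsClosed {p : G × X | p.2 ∈ θ.dom p.1⁻¹}) :
    IsClosed {p : G × NCompact X | p.2.carrier ⊆ θ.dom p.1⁻¹} :=
  isClosed_hyperspace_domain_general θ hclosed
end

section
/- Let θ = (θ_g, X_g)_{g∈G} be a topological partial action of a topological group G on a compact Hausdorff space X, let R be the equivalence relation on G × X given by (g,x) R (h,y) iff x ∈ X_{g⁻¹h} and θ_{h⁻¹g}(x) = y, and let 2^R be the equivalence relation on G × 2^X given by (g,A) 2^R (h,B) iff A ⊆ X_{g⁻¹h} and θ_{h⁻¹g}(A) = B. If R is closed as a subset of (G × X) × (G × X), then 2^R is closed as a subset of (G × 2^X) × (G × 2^X). -/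
variable {G X : Type*} [Group G] [TopologicalSpace G] [TopologicalSpace X]

/-- The equivalence relation `R` on `G × X` defining the enveloping space `X_G = (G × X)/R`:
`(g,x) R (h,y)` iff `x ∈ X_{g⁻¹h}` and `θ_{h⁻¹g}(x) = y`. -/
def envRel (θ : TopPartialAction G X) (p q : G × X) : Prop :=
  p.2 ∈ θ.dom (p.1⁻¹ * q.1) ∧ θ.map (q.1⁻¹ * p.1) p.2 = q.2

/-- The relation `2^R` on `G × 2^X` defining the enveloping space `(2^X)_G` of the induced
partial action `2^θ`: `(g,A) 2^R (h,B)` iff `A ⊆ X_{g⁻¹h}` and `θ_{h⁻¹g}(A) = B`. -/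
def envRelH (θ : TopPartialAction G X) (p q : G × NCompact X) : Prop :=
  p.2.carrier ⊆ θ.dom (p.1⁻¹ * q.1) ∧ θ.map (q.1⁻¹ * p.1) '' p.2.carrier = q.2.carrier

/-!
A pair `(g, A), (h, B)` is `2^R`-related exactly when every point of `A` is `R`-related to some
point of `B` and vice versa, so `2^R` is the Vietoris lift of `R`. Lifting preserves closedness:
if `a ∈ A` is related to no point of the compact set `{h} × B`, the tube lemma separates
`(g, a)` from `{h} × B` by a product of open sets avoiding `R`, and these give a Vietoris
neighbourhood of the pair on which the same failure persists.
-/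

open Set Filter Topology

lemma subset_and_image_eq_iff {α β : Type*} {f : α → β} {D A : Set α} {B : Set β} :
    (A ⊆ D ∧ f '' A = B) ↔
      (∀ a ∈ A, ∃ b ∈ B, a ∈ D ∧ f a = b) ∧ ∀ b ∈ B, ∃ a ∈ A, a ∈ D ∧ f a = b := by
  constructor
  · rintro ⟨hAD, rfl⟩
    exact ⟨fun a ha => ⟨f a, mem_image_of_mem f ha, hAD ha, rfl⟩,
      fun _ ⟨a, ha, hab⟩ => ⟨a, ha, hAD ha, hab⟩⟩
  · rintro ⟨hfwd, hbwd⟩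
    refine ⟨fun a ha => (hfwd a ha).choose_spec.2.1, Subset.antisymm ?_ fun b hb => ?_⟩
    · rintro _ ⟨a, ha, rfl⟩
      obtain ⟨b, hb, -, rfl⟩ := hfwd a ha
      exact hb
    · obtain ⟨a, ha, -, rfl⟩ := hbwd b hb
      exact mem_image_of_mem f ha

namespace NCompact

lemma eventually_subset {A : NCompact X} {U : Set X} (hU : U ∈ 𝓝ˢ A.carrier) :
    ∀ᶠ A' in 𝓝 A, A'.carrier ⊆ U := by
  have hopen : IsOpen {A' : NCompact X | A'.carrier ⊆ interior U} :=
    TopologicalSpace.isOpen_generateFrom_of_mem ⟨interior U, isOpen_interior, Or.inl rfl⟩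
  filter_upwards [hopen.mem_nhds (subset_interior_iff_mem_nhdsSet.mpr hU)] with A' hA'
  exact hA'.trans interior_subset

lemma eventually_exists_mem {A : NCompact X} {a : X} (ha : a ∈ A.carrier) {U : Set X}
    (hU : U ∈ 𝓝 a) : ∀ᶠ A' in 𝓝 A, ∃ a' ∈ A'.carrier, a' ∈ U := by
  have hopen : IsOpen {A' : NCompact X | (A'.carrier ∩ interior U).Nonempty} :=
    TopologicalSpace.isOpen_generateFrom_of_mem ⟨interior U, isOpen_interior, Or.inr rfl⟩
  filter_upwards [hopen.mem_nhds ⟨a, ha, mem_interior_iff_mem_nhds.mpr hU⟩]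
    with A' ⟨a', ha'A, ha'U⟩
  exact ⟨a', ha'A, interior_subset ha'U⟩

variable {α β W : Type*} [TopologicalSpace W]

def LiftRel (r : α × X → β × W → Prop) (p : α × NCompact X) (q : β × NCompact W) : Prop :=
  (∀ a ∈ p.2.carrier, ∃ b ∈ q.2.carrier, r (p.1, a) (q.1, b)) ∧
    ∀ b ∈ q.2.carrier, ∃ a ∈ p.2.carrier, r (p.1, a) (q.1, b)

variable [TopologicalSpace α] [TopologicalSpace β]

lemma isClosed_setOf_forall_exists {r : α × X → β × W → Prop}
    (hr : IsClosed {pq : (α × X) × (β × W) | r pq.1 pq.2}) :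
    IsClosed {pq : (α × NCompact X) × (β × NCompact W) |
      ∀ a ∈ pq.1.2.carrier, ∃ b ∈ pq.2.2.carrier, r (pq.1.1, a) (pq.2.1, b)} := by
  refine isOpen_compl_iff.mp (isOpen_iff_eventually.mpr ?_)
  rintro ⟨⟨g, A⟩, h, B⟩ hgh
  simp only [mem_compl_iff, mem_ofPred_eq, not_forall, not_exists, not_and, exists_prop] at hgh
  obtain ⟨a, ha, hab⟩ := hgh
  have hsep : {pq : (α × X) × (β × W) | ¬r pq.1 pq.2} ∈ 𝓝 (g, a) ×ˢ (𝓝 h ×ˢ 𝓝ˢ B.carrier) := by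
    rw [← nhdsSet_singleton, ← nhdsSet_singleton (x := h),
      ← isCompact_singleton.nhdsSet_prod_eq B.isCompact',
      ← isCompact_singleton.nhdsSet_prod_eq (isCompact_singleton.prod B.isCompact')]
    refine hr.isOpen_compl.mem_nhdsSet.mpr ?_
    rintro ⟨_, _, b⟩ ⟨rfl, rfl, hb⟩
    exact hab b hb
  obtain ⟨U, hU, V, hV, hUV⟩ := mem_prod_iff.mp hsep
  obtain ⟨U₁, hU₁, U₂, hU₂, hU₁₂⟩ := mem_nhds_prod_iff.mp hU
  obtain ⟨V₁, hV₁, V₂, hV₂, hV₁₂⟩ := mem_prod_iff.mp hV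
  filter_upwards [(continuous_fst.fst.tendsto _).eventually_mem hU₁,
    (continuous_fst.snd.tendsto _).eventually (eventually_exists_mem ha hU₂),
    (continuous_snd.fst.tendsto _).eventually_mem hV₁,
    (continuous_snd.snd.tendsto _).eventually (eventually_subset hV₂)]
    with ⟨⟨g', A'⟩, h', B'⟩ hg' ⟨a', ha'A, ha'U⟩ hh' hB'
  intro hall
  obtain ⟨b', hb', hr'⟩ := hall a' ha'A
  exact hUV (mk_mem_prod (hU₁₂ (mk_mem_prod hg' ha'U)) (hV₁₂ (mk_mem_prod hh' (hB' hb')))) hr'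

lemma isClosed_setOf_liftRel {r : α × X → β × W → Prop}
    (hr : IsClosed {pq : (α × X) × (β × W) | r pq.1 pq.2}) :
    IsClosed {pq : (α × NCompact X) × (β × NCompact W) | LiftRel r pq.1 pq.2} :=
  (isClosed_setOf_forall_exists hr).inter <|
    (isClosed_setOf_forall_exists (r := fun q p => r p q) (hr.preimage continuous_swap)).preimage
      continuous_swap

end NCompact

lemma envRelH_iff_liftRel_envRel (θ : TopPartialAction G X) (p q : G × NCompact X) :
    envRelH θ p q ↔ NCompact.LiftRel (envRel θ) p q :=
  subset_and_image_eq_iff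

theorem isClosed_hyperspace_envRel_general
    {G X : Type*} [Group G] [TopologicalSpace G]
    [TopologicalSpace X]
    (θ : TopPartialAction G X)
    (hR : IsClosed {pq : (G × X) × (G × X) | envRel θ pq.1 pq.2}) :
    IsClosed {pq : (G × NCompact X) × (G × NCompact X) | envRelH θ pq.1 pq.2} := by
  simpa only [← envRelH_iff_liftRel_envRel] using NCompact.isClosed_setOf_liftRel hR

/-- Let `θ` be a topological partial action of a topological group `G` on a compact Hausdorff
space `X`.  If the relation `R` (defining the enveloping space `X_G`) is closed as a subset
of `(G × X) × (G × X)`, then the relation `2^R` (defining the enveloping space `(2^X)_G` of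
the induced partial action on the hyperspace `2^X`) is closed as a subset of
`(G × 2^X) × (G × 2^X)`. -/
theorem isClosed_hyperspace_envRel
    {G X : Type*} [Group G] [TopologicalSpace G] [IsTopologicalGroup G]
    [TopologicalSpace X] [CompactSpace X] [T2Space X]
    (θ : TopPartialAction G X)
    (hR : IsClosed {pq : (G × X) × (G × X) | envRel θ pq.1 pq.2}) :
    IsClosed {pq : (G × NCompact X) × (G × NCompact X) | envRelH θ pq.1 pq.2} :=
  isClosed_hyperspace_envRel_general θ hR
end
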